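/- arXiv:2509.21268 — 2 statements merged into one kernel-verified Lean document; each statement's English description precedes it below -/
import Mathlib

section
/- Variance–Progress theorem (sharp form): let J : ℝ^d → ℝ be twice continuously differentiable with ‖∇²J(θ)‖ ≤ L for all θ (L > 0), let (Ω, μ) be a probability space, and let G : Ω → ℝ^d be Bochner integrable with ∫ G dμ = ∇J(θ₀) and ∫ ‖G‖² dμ < ∞. Suppose there are constants V ≥ 0, c_min > 0, G_max ≥ 0 such that ∫ ‖G‖² dμ ≤ ‖∇J(θ₀)‖² + d · G_max² · V and ‖∇J(θ₀)‖² ≥ c_min · V. Then for every step size η with 0 < η ≤ c_min / (2 L (c_min + d · G_max²)), the expected one-step gain satisfies ∫ J(θ₀ + η • G(ω)) dμ(ω) − J(θ₀) ≥ (η c_min / 2) · V. -/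
open MeasureTheory

set_option maxHeartbeats 600000 in
/-- Variance–Progress theorem (sharp form): under `L`-smoothness, unbiasedness and the
second-moment and gradient-lower-bound assumptions, for every
`0 < η ≤ c_min / (2L(c_min + d·G_max²))` the expected one-step gain satisfies
`∫ J(θ₀ + η • G) dμ − J(θ₀) ≥ (η c_min / 2) · V`. -/
theorem variance_progress_sharp {d : ℕ}
    (J : EuclideanSpace ℝ (Fin d) → ℝ)
    (hJ : ContDiff ℝ 2 J)
    (L : ℝ) (hL : 0 < L)
    (hHess : ∀ θ : EuclideanSpace ℝ (Fin d), ‖fderiv ℝ (fderiv ℝ J) θ‖ ≤ L)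
    {Ω : Type*} [MeasurableSpace Ω] (μ : Measure Ω) [IsProbabilityMeasure μ]
    (G : Ω → EuclideanSpace ℝ (Fin d))
    (hGint : Integrable G μ)
    (θ₀ : EuclideanSpace ℝ (Fin d))
    (hGmean : ∫ ω, G ω ∂μ = gradient J θ₀)
    (hGsq : Integrable (fun ω => ‖G ω‖ ^ 2) μ)
    (V cmin Gmax : ℝ) (hV : 0 ≤ V) (hcmin : 0 < cmin) (hGmax : 0 ≤ Gmax)
    (hsecond : ∫ ω, ‖G ω‖ ^ 2 ∂μ ≤ ‖gradient J θ₀‖ ^ 2 + d * Gmax ^ 2 * V)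
    (hgrad : cmin * V ≤ ‖gradient J θ₀‖ ^ 2) :
    ∀ η : ℝ, 0 < η → η ≤ cmin / (2 * L * (cmin + d * Gmax ^ 2)) →
      η * cmin / 2 * V ≤ (∫ ω, J (θ₀ + η • G ω) ∂μ) - J θ₀ := by
  intro η hη hηle
  have hJd : Differentiable ℝ J := hJ.differentiable (by norm_num)
  have hJ'c : ContDiff ℝ 1 (fderiv ℝ J) := hJ.fderiv_right (m := 1) (by norm_num)
  have hJ'd : Differentiable ℝ (fderiv ℝ J) := hJ'c.differentiable (by norm_num)
  -- Lipschitz gradient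
  have hLip : ∀ x y : EuclideanSpace ℝ (Fin d),
      ‖fderiv ℝ J y - fderiv ℝ J x‖ ≤ L * ‖y - x‖ := fun x y =>
    convex_univ.norm_image_sub_le_of_norm_fderiv_le (fun z _ => hJ'd z)
      (fun z _ => hHess z) trivial trivial
  -- pointwise Taylor bound
  have hTaylor : ∀ v : EuclideanSpace ℝ (Fin d),
      |J (θ₀ + v) - J θ₀ - fderiv ℝ J θ₀ v| ≤ L * ‖v‖ ^ 2 := by
    intro v
    have hseg : ∀ z ∈ segment ℝ θ₀ (θ₀ + v),
        ‖fderiv ℝ J z - fderiv ℝ J θ₀‖ ≤ L * ‖v‖ := by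
      intro z hz
      obtain ⟨a, b, ha, hb, hab, rfl⟩ := hz
      have hzv : a • θ₀ + b • (θ₀ + v) - θ₀ = b • v := by
        have : a = 1 - b := by linarith
        subst this
        module
      calc ‖fderiv ℝ J (a • θ₀ + b • (θ₀ + v)) - fderiv ℝ J θ₀‖
          ≤ L * ‖a • θ₀ + b • (θ₀ + v) - θ₀‖ := hLip _ _
        _ = L * ‖b • v‖ := by rw [hzv]
        _ ≤ L * ‖v‖ := by
            rw [norm_smul]
            have : ‖(b : ℝ)‖ * ‖v‖ ≤ 1 * ‖v‖ := by
              apply mul_le_mul_of_nonneg_right _ (norm_nonneg _)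
              rw [Real.norm_eq_abs, abs_of_nonneg hb]; linarith
            nlinarith [norm_nonneg v]
    have key := (convex_segment θ₀ (θ₀ + v)).norm_image_sub_le_of_norm_fderiv_le'
      (f := J) (φ := fderiv ℝ J θ₀) (fun z _ => hJd z) hseg
      (left_mem_segment ℝ θ₀ (θ₀ + v)) (right_mem_segment ℝ θ₀ (θ₀ + v))
    have hsub : θ₀ + v - θ₀ = v := by abel
    rw [hsub] at key
    calc |J (θ₀ + v) - J θ₀ - fderiv ℝ J θ₀ v| ≤ L * ‖v‖ * ‖v‖ := key
      _ = L * ‖v‖ ^ 2 := by ring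
  -- notation
  set g := gradient J θ₀ with hg
  have hfd_apply : ∀ v : EuclideanSpace ℝ (Fin d), fderiv ℝ J θ₀ v = inner ℝ g v := by
    intro v
    rw [hg, gradient]
    exact (InnerProductSpace.toDual_symm_apply (𝕜 := ℝ)
      (y := fderiv ℝ J θ₀) (x := v)).symm
  have hfdg : fderiv ℝ J θ₀ g = ‖g‖ ^ 2 := by
    rw [hfd_apply, real_inner_self_eq_norm_sq]
  -- integrability facts
  have hlin : Integrable (fun ω => fderiv ℝ J θ₀ (G ω)) μ :=
    (fderiv ℝ J θ₀).integrable_comp hGint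
  have hA : Integrable (fun ω => J θ₀ + η * fderiv ℝ J θ₀ (G ω)) μ :=
    (integrable_const _).add (hlin.const_mul η)
  have hB : Integrable (fun ω => L * η ^ 2 * ‖G ω‖ ^ 2) μ := hGsq.const_mul _
  have hlower : Integrable
      (fun ω => J θ₀ + η * fderiv ℝ J θ₀ (G ω) - L * η ^ 2 * ‖G ω‖ ^ 2) μ := hA.sub hB
  have hmeas : AEStronglyMeasurable (fun ω => J (θ₀ + η • G ω)) μ :=
    hJ.continuous.comp_aestronglyMeasurable
      ((aestronglyMeasurable_const).add (hGint.aestronglyMeasurable.const_smul η))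
  have hJint : Integrable (fun ω => J (θ₀ + η • G ω)) μ := by
    have hbint : Integrable
        (fun ω => |J θ₀| + ‖fderiv ℝ J θ₀‖ * (η * ‖G ω‖) + L * η ^ 2 * ‖G ω‖ ^ 2) μ :=
      ((integrable_const _).add
        ((hGint.norm.const_mul η).const_mul ‖fderiv ℝ J θ₀‖)).add (hGsq.const_mul _)
    refine Integrable.mono' hbint hmeas ?_
    filter_upwards with ω
    have h1 := hTaylor (η • G ω)
    have h2 : |fderiv ℝ J θ₀ (η • G ω)| ≤ ‖fderiv ℝ J θ₀‖ * (η * ‖G ω‖) := by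
      calc |fderiv ℝ J θ₀ (η • G ω)| ≤ ‖fderiv ℝ J θ₀‖ * ‖η • G ω‖ :=
            (fderiv ℝ J θ₀).le_opNorm _
        _ = ‖fderiv ℝ J θ₀‖ * (η * ‖G ω‖) := by
            rw [norm_smul, Real.norm_eq_abs, abs_of_pos hη]
    have h3 : ‖η • G ω‖ ^ 2 = η ^ 2 * ‖G ω‖ ^ 2 := by
      rw [norm_smul, Real.norm_eq_abs, abs_of_pos hη]; ring
    rw [Real.norm_eq_abs, abs_le]
    rw [h3] at h1
    obtain ⟨hlo, hhi⟩ := abs_le.mp h1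
    obtain ⟨h2a, h2b⟩ := abs_le.mp h2
    constructor <;>
      linarith [le_abs_self (J θ₀), neg_abs_le (J θ₀),
        mul_nonneg (mul_nonneg hL.le (sq_nonneg η)) (sq_nonneg ‖G ω‖)]
  -- integrate the Taylor lower bound
  have hmono : (∫ ω, J θ₀ + η * fderiv ℝ J θ₀ (G ω) - L * η ^ 2 * ‖G ω‖ ^ 2 ∂μ)
      ≤ ∫ ω, J (θ₀ + η • G ω) ∂μ := by
    refine integral_mono hlower hJint ?_
    intro ω
    have h1 := hTaylor (η • G ω)
    have h3 : ‖η • G ω‖ ^ 2 = η ^ 2 * ‖G ω‖ ^ 2 := by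
      rw [norm_smul, Real.norm_eq_abs, abs_of_pos hη]; ring
    have h4 : fderiv ℝ J θ₀ (η • G ω) = η * fderiv ℝ J θ₀ (G ω) := by
      exact (fderiv ℝ J θ₀).map_smul η (G ω)
    rw [h3, h4] at h1
    have := neg_abs_le (J (θ₀ + η • G ω) - J θ₀ - η * fderiv ℝ J θ₀ (G ω))
    simp only
    linarith [abs_le.mp h1 |>.1]
  -- compute the lower integral
  have hcomp : (∫ ω, J θ₀ + η * fderiv ℝ J θ₀ (G ω) - L * η ^ 2 * ‖G ω‖ ^ 2 ∂μ)
      = J θ₀ + η * ‖g‖ ^ 2 - L * η ^ 2 * ∫ ω, ‖G ω‖ ^ 2 ∂μ := by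
    rw [integral_sub hA hB,
      integral_add (integrable_const _) (hlin.const_mul η),
      integral_const, integral_const_mul, integral_const_mul,
      ContinuousLinearMap.integral_comp_comm _ hGint, hGmean, hfdg]
    simp
  set S := ∫ ω, ‖G ω‖ ^ 2 ∂μ with hS
  -- key algebra
  have hden : (0 : ℝ) < 2 * L * (cmin + d * Gmax ^ 2) := by positivity
  have hη1 : η * (2 * L * (cmin + d * Gmax ^ 2)) ≤ cmin :=
    (le_div_iff₀ hden).mp hηle
  have hhalf : L * η * (cmin + d * Gmax ^ 2) ≤ cmin / 2 := by linarith
  have hLηD : (0:ℝ) ≤ L * η * ((d : ℝ) * Gmax ^ 2) := by positivity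
  have hLη : L * η ≤ 1 / 2 :=
    le_of_mul_le_mul_right (by linarith : L * η * cmin ≤ 1 / 2 * cmin) hcmin
  have e1 : L * η ^ 2 * S ≤ L * η ^ 2 * (‖g‖ ^ 2 + d * Gmax ^ 2 * V) :=
    mul_le_mul_of_nonneg_left hsecond (by positivity)
  have e2 : (0:ℝ) ≤ η * (1 - L * η) * (‖g‖ ^ 2 - cmin * V) :=
    mul_nonneg (mul_nonneg hη.le (by linarith)) (sub_nonneg.mpr hgrad)
  have e3 : (0:ℝ) ≤ η * V * (cmin / 2 - L * η * (cmin + d * Gmax ^ 2)) :=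
    mul_nonneg (mul_nonneg hη.le hV) (by linarith)
  have halg : η * cmin / 2 * V ≤ η * ‖g‖ ^ 2 - L * η ^ 2 * S := by nlinarith [e1, e2, e3]
  rw [hcomp] at hmono
  linarith
end

section
/- Variance–Progress theorem (Theorem 1 form): let J : ℝ^d → ℝ be twice continuously differentiable with ‖∇²J(θ)‖ ≤ L for all θ (L > 0), let (Ω, μ) be a probability space, and let G : Ω → ℝ^d be Bochner integrable with ∫ G dμ = ∇J(θ₀) and ∫ ‖G‖² dμ < ∞. Suppose there are constants V ≥ 0, c_min > 0, G_max ≥ 0 such that ∫ ‖G‖² dμ ≤ ‖∇J(θ₀)‖² + d · G_max² · V and ‖∇J(θ₀)‖² ≥ c_min · V. Then for every step size η with 0 < η ≤ c_min / (4 L (c_min + d · G_max²)), the expected one-step gain is linearly lower-bounded by the variance: ∫ J(θ₀ + η • G(ω)) dμ(ω) − J(θ₀) ≥ (η c_min / 4) · V. -/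
open MeasureTheory

/-- Second-order Taylor bound: if the second derivative is bounded by `L`, then
`|J (θ₀ + v) - J θ₀ - fderiv J θ₀ v| ≤ L * ‖v‖²`. -/
lemma taylor_bound_aux {d : ℕ} (J : EuclideanSpace ℝ (Fin d) → ℝ)
    (hJ : ContDiff ℝ 2 J) (L : ℝ)
    (hHess : ∀ θ : EuclideanSpace ℝ (Fin d), ‖fderiv ℝ (fderiv ℝ J) θ‖ ≤ L)
    (θ₀ v : EuclideanSpace ℝ (Fin d)) :
    |J (θ₀ + v) - J θ₀ - fderiv ℝ J θ₀ v| ≤ L * ‖v‖ ^ 2 := by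
  have hJ1 : Differentiable ℝ J := hJ.differentiable (by norm_num)
  have hdJ : Differentiable ℝ (fderiv ℝ J) := by
    have : ContDiff ℝ 1 (fderiv ℝ J) := (hJ.fderiv_right (by norm_num))
    exact this.differentiable (by norm_num)
  -- fderiv J is L-Lipschitz
  have hlip : ∀ x y : EuclideanSpace ℝ (Fin d),
      ‖fderiv ℝ J x - fderiv ℝ J y‖ ≤ L * ‖x - y‖ := by
    intro x y
    exact Convex.norm_image_sub_le_of_norm_fderiv_le
      (fun z _ => hdJ z) (fun z _ => hHess z) convex_univ (Set.mem_univ y) (Set.mem_univ x)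
  set s := Metric.closedBall θ₀ ‖v‖ with hs
  have hmem₀ : θ₀ ∈ s := by simp [hs]
  have hmem₁ : θ₀ + v ∈ s := by
    simp [hs, Metric.mem_closedBall, dist_eq_norm]
  have key : ‖(J (θ₀ + v) - fderiv ℝ J θ₀ (θ₀ + v)) - (J θ₀ - fderiv ℝ J θ₀ θ₀)‖
      ≤ (L * ‖v‖) * ‖(θ₀ + v) - θ₀‖ := by
    apply Convex.norm_image_sub_le_of_norm_hasFDerivWithin_le
      (f := fun x => J x - fderiv ℝ J θ₀ x)
      (f' := fun x => fderiv ℝ J x - fderiv ℝ J θ₀)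
      (fun x _ => (((hJ1 x).hasFDerivAt.sub (fderiv ℝ J θ₀).hasFDerivAt)).hasFDerivWithinAt)
      ?_ (convex_closedBall _ _) hmem₀ hmem₁
    intro x hx
    calc ‖fderiv ℝ J x - fderiv ℝ J θ₀‖ ≤ L * ‖x - θ₀‖ := hlip x θ₀
      _ ≤ L * ‖v‖ := by
          have hL0 : 0 ≤ L := le_trans (norm_nonneg (fderiv ℝ (fderiv ℝ J) θ₀)) (hHess θ₀)
          have : ‖x - θ₀‖ ≤ ‖v‖ := by
            rw [← dist_eq_norm]; exact Metric.mem_closedBall.mp hx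
          exact mul_le_mul_of_nonneg_left this hL0
  have hlin : fderiv ℝ J θ₀ (θ₀ + v) = fderiv ℝ J θ₀ θ₀ + fderiv ℝ J θ₀ v := map_add _ _ _
  have hsub : (θ₀ + v) - θ₀ = v := add_sub_cancel_left θ₀ v
  rw [hsub, hlin] at key
  have : ‖J (θ₀ + v) - J θ₀ - fderiv ℝ J θ₀ v‖ ≤ L * ‖v‖ * ‖v‖ := by
    convert key using 2; ring
  simpa [Real.norm_eq_abs, sq, mul_assoc] using this

set_option maxHeartbeats 1600000 in
/-- Variance–Progress theorem (Theorem 1 form): under `L`-smoothness, unbiasedness and the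
second-moment and gradient-lower-bound assumptions, for every
`0 < η ≤ c_min / (4L(c_min + d·G_max²))` the expected one-step gain satisfies
`∫ J(θ₀ + η • G) dμ − J(θ₀) ≥ (η c_min / 4) · V`. -/
theorem variance_progress_theorem {d : ℕ}
    (J : EuclideanSpace ℝ (Fin d) → ℝ)
    (hJ : ContDiff ℝ 2 J)
    (L : ℝ) (hL : 0 < L)
    (hHess : ∀ θ : EuclideanSpace ℝ (Fin d), ‖fderiv ℝ (fderiv ℝ J) θ‖ ≤ L)
    {Ω : Type*} [MeasurableSpace Ω] (μ : Measure Ω) [IsProbabilityMeasure μ]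
    (G : Ω → EuclideanSpace ℝ (Fin d))
    (hGint : Integrable G μ)
    (θ₀ : EuclideanSpace ℝ (Fin d))
    (hGmean : ∫ ω, G ω ∂μ = gradient J θ₀)
    (hGsq : Integrable (fun ω => ‖G ω‖ ^ 2) μ)
    (V cmin Gmax : ℝ) (hV : 0 ≤ V) (hcmin : 0 < cmin) (hGmax : 0 ≤ Gmax)
    (hsecond : ∫ ω, ‖G ω‖ ^ 2 ∂μ ≤ ‖gradient J θ₀‖ ^ 2 + d * Gmax ^ 2 * V)
    (hgrad : cmin * V ≤ ‖gradient J θ₀‖ ^ 2) :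
    ∀ η : ℝ, 0 < η → η ≤ cmin / (4 * L * (cmin + d * Gmax ^ 2)) →
      η * cmin / 4 * V ≤ (∫ ω, J (θ₀ + η • G ω) ∂μ) - J θ₀ := by
  intro η hη hηle
  set g := gradient J θ₀ with hg
  set S := ‖g‖ ^ 2 with hS
  set M := ∫ ω, ‖G ω‖ ^ 2 ∂μ with hM
  set ℓ := fderiv ℝ J θ₀ with hℓ
  -- pointwise taylor bound
  have hpt : ∀ ω, J θ₀ + η * ℓ (G ω) - L * η ^ 2 * ‖G ω‖ ^ 2 ≤ J (θ₀ + η • G ω) := by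
    intro ω
    have := taylor_bound_aux J hJ L hHess θ₀ (η • G ω)
    have hns : ‖η • G ω‖ ^ 2 = η ^ 2 * ‖G ω‖ ^ 2 := by
      rw [norm_smul]; rw [Real.norm_eq_abs]; rw [mul_pow, sq_abs]
    have hl : ℓ (η • G ω) = η * ℓ (G ω) := map_smul _ _ _
    rw [hns, hl] at this
    have := abs_le.mp this
    linarith [this.1]
  -- integrability pieces
  have hℓG : Integrable (fun ω => ℓ (G ω)) μ := ℓ.integrable_comp hGint
  have hLower : Integrable
      (fun ω => J θ₀ + η * ℓ (G ω) - L * η ^ 2 * ‖G ω‖ ^ 2) μ :=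
    ((integrable_const _).add (hℓG.const_mul η)).sub (hGsq.const_mul _)
  have hUpperMeas : AEStronglyMeasurable (fun ω => J (θ₀ + η • G ω)) μ :=
    hJ.continuous.comp_aestronglyMeasurable
      ((hGint.aestronglyMeasurable.const_smul η).const_add θ₀)
  have hUpper : Integrable (fun ω => J (θ₀ + η • G ω)) μ := by
    apply Integrable.mono'
      (((integrable_const (|J θ₀|)).add ((hGint.norm.const_mul (|η| * ‖ℓ‖)))).add
        (hGsq.const_mul (L * η ^ 2))) hUpperMeas
    filter_upwards with ω
    have h1 := taylor_bound_aux J hJ L hHess θ₀ (η • G ω)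
    have hns : ‖η • G ω‖ ^ 2 = η ^ 2 * ‖G ω‖ ^ 2 := by
      rw [norm_smul, Real.norm_eq_abs, mul_pow, sq_abs]
    rw [hns] at h1
    have h2 : |ℓ (η • G ω)| ≤ |η| * ‖ℓ‖ * ‖G ω‖ := by
      have := ℓ.le_opNorm (η • G ω)
      rw [norm_smul, Real.norm_eq_abs] at this
      calc |ℓ (η • G ω)| ≤ ‖ℓ‖ * (|η| * ‖G ω‖) := this
        _ = |η| * ‖ℓ‖ * ‖G ω‖ := by ring
    have := abs_sub_abs_le_abs_sub (J (θ₀ + η • G ω)) (J θ₀ + ℓ (η • G ω))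
    have habs : |J (θ₀ + η • G ω)| ≤ |J θ₀ + ℓ (η • G ω)| + L * η ^ 2 * ‖G ω‖ ^ 2 := by
      have h3 : |J (θ₀ + η • G ω) - (J θ₀ + ℓ (η • G ω))| ≤ L * η ^ 2 * ‖G ω‖ ^ 2 := by
        rw [← hℓ] at h1
        have he : J (θ₀ + η • G ω) - (J θ₀ + ℓ (η • G ω))
            = J (θ₀ + η • G ω) - J θ₀ - ℓ (η • G ω) := by ring
        rw [he]; linarith
      calc |J (θ₀ + η • G ω)|
          ≤ |J θ₀ + ℓ (η • G ω)| + |J (θ₀ + η • G ω) - (J θ₀ + ℓ (η • G ω))| := by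
            have := abs_add_le (J θ₀ + ℓ (η • G ω)) (J (θ₀ + η • G ω) - (J θ₀ + ℓ (η • G ω)))
            simpa using this
        _ ≤ |J θ₀ + ℓ (η • G ω)| + L * η ^ 2 * ‖G ω‖ ^ 2 := by linarith
    have : |J (θ₀ + η • G ω)| ≤ (|J θ₀| + |η| * ‖ℓ‖ * ‖G ω‖) + L * η ^ 2 * ‖G ω‖ ^ 2 := by
      have := abs_add_le (J θ₀) (ℓ (η • G ω))
      linarith
    simpa [Real.norm_eq_abs, abs_of_nonneg, mul_assoc] using this
  -- integrate the pointwise bound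
  have hIntLe : ∫ ω, (J θ₀ + η * ℓ (G ω) - L * η ^ 2 * ‖G ω‖ ^ 2) ∂μ
      ≤ ∫ ω, J (θ₀ + η • G ω) ∂μ :=
    integral_mono hLower hUpper hpt
  have hIntℓ : ∫ ω, ℓ (G ω) ∂μ = S := by
    rw [ContinuousLinearMap.integral_comp_comm ℓ hGint, hGmean]
    have : ℓ g = @inner ℝ _ _ g g := by
      rw [hg, gradient]
      exact (InnerProductSpace.toDual_symm_apply).symm
    rw [this, real_inner_self_eq_norm_sq]
  have hIntLower : ∫ ω, (J θ₀ + η * ℓ (G ω) - L * η ^ 2 * ‖G ω‖ ^ 2) ∂μ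
      = J θ₀ + η * S - L * η ^ 2 * M := by
    have h1 : Integrable (fun ω => J θ₀ + η * ℓ (G ω)) μ :=
      (integrable_const _).add (hℓG.const_mul η)
    have h2 : Integrable (fun ω => L * η ^ 2 * ‖G ω‖ ^ 2) μ := hGsq.const_mul _
    have h3 : Integrable (fun ω => η * ℓ (G ω)) μ := hℓG.const_mul η
    rw [integral_sub h1 h2, integral_add (integrable_const _) h3,
      integral_const, integral_const_mul, integral_const_mul, hIntℓ]
    simp [hM]
  rw [hIntLower] at hIntLe
  -- arithmetic
  have hA : 0 < cmin + d * Gmax ^ 2 := by positivity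
  have hηb : η * (4 * L * (cmin + d * Gmax ^ 2)) ≤ cmin :=
    (le_div_iff₀ (by positivity)).mp hηle
  have hM0 : 0 ≤ M := integral_nonneg (fun ω => by positivity)
  have hS0 : 0 ≤ S := sq_nonneg _
  clear_value S M g ℓ
  have hdG : (0:ℝ) ≤ (d:ℝ) * Gmax ^ 2 := by positivity
  have hcM : cmin * M ≤ (cmin + d * Gmax ^ 2) * S := by
    nlinarith [mul_le_mul_of_nonneg_left hsecond hcmin.le,
      mul_le_mul_of_nonneg_left hgrad hdG]
  have hkey : L * η ^ 2 * M ≤ η * S / 4 := by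
    nlinarith [mul_le_mul_of_nonneg_left hcM (by positivity : (0:ℝ) ≤ L * η ^ 2),
      mul_le_mul_of_nonneg_right hηb (mul_nonneg hη.le hS0), hcmin]
  have h6 : η * (cmin * V) ≤ η * S := mul_le_mul_of_nonneg_left hgrad hη.le
  have h7 : 0 ≤ η * (cmin * V) := mul_nonneg hη.le (mul_nonneg hcmin.le hV)
  linarith [hIntLe, hkey, h6, h7]
end
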